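/- arXiv:1807.02566 — 2 statements merged into one kernel-verified Lean document; each statement's English description precedes it below -/
import Mathlib

section
/- Success of a transition conditions correctly: for a condition/event net with uncertainty with transition t (with disjoint precondition •t and postcondition t•), mass function p with P({m' : m' enables t}) > 0, the distribution success_t(p) := set_{t•,1}(set_{•t,0}(ass_{t•,0}(ass_{•t,1}(p)))) satisfies success_t(p)(m) = P({m' : m' ⇒^t m} | {m' : m' enables t}) for every marking m. -/
open Finset

/-- The assert operation. -/
noncomputable def ass {S : Type*} [Fintype S] [DecidableEq S]
    (A : Finset S) (b : Bool) (p : (S → Bool) → ℝ) : (S → Bool) → ℝ :=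
  fun m => if ∀ s ∈ A, m s = b
    then p m / ∑ m' ∈ univ.filter (fun m' : S → Bool => ∀ s ∈ A, m' s = b), p m'
    else 0

/-- The set operation. -/
noncomputable def setOp {S : Type*} [Fintype S] [DecidableEq S]
    (A : Finset S) (b : Bool) (p : (S → Bool) → ℝ) : (S → Bool) → ℝ :=
  fun m => if ∀ s ∈ A, m s = b
    then ∑ m' ∈ univ.filter (fun m' : S → Bool => ∀ s, s ∉ A → m' s = m s), p m'
    else 0

/-- `m` enables a transition with precondition `pre` and postcondition `post`. -/
def enables {S : Type*} (pre post : Finset S) (m : S → Bool) : Prop :=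
  (∀ s ∈ pre, m s = true) ∧ (∀ s ∈ post, m s = false)

instance {S : Type*} (pre post : Finset S) (m : S → Bool) :
    Decidable (enables pre post m) := by
  unfold enables; infer_instance

/-- The marking obtained by firing the transition from `m`. -/
def fire {S : Type*} [DecidableEq S] (pre post : Finset S) (m : S → Bool) : S → Bool :=
  fun s => if s ∈ post then true else if s ∈ pre then false else m s

/-!
Both `ass` steps are conditionings, and conditioning on `•t = 1` and then on `t• = 0` is
conditioning on enabledness (the first normalizer is positive because the enabled markings lie
inside `{•t = 1}`). Each `set` step is the image of the mass function under forcing its places,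
and forcing `•t` to `0` and then `t•` to `1` is exactly firing `t`. So `success_t(p)` is the image
of `P(· | t enabled)` under firing, whose value at `m` is the claimed conditional probability.
-/

section MassFunction

variable {α β γ : Type*} [Fintype α]

noncomputable def condMass (E : α → Prop) [DecidablePred E] (p : α → ℝ) : α → ℝ :=
  fun x => if E x then p x / ∑ x' ∈ univ.filter E, p x' else 0

def mapMass [DecidableEq β] (f : α → β) (q : α → ℝ) : β → ℝ :=
  fun y => ∑ x ∈ univ.filter (fun x => f x = y), q x

theorem condMass_condMass (E F G : α → Prop) [DecidablePred E] [DecidablePred F]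
    [DecidablePred G] (p : α → ℝ) (hE : ∑ x ∈ univ.filter E, p x ≠ 0)
    (hG : ∀ x, G x ↔ E x ∧ F x) :
    condMass F (condMass E p) = condMass G p := by
  have hF : ∑ x ∈ univ.filter F, condMass E p x =
      (∑ x ∈ univ.filter (fun x => E x ∧ F x), p x) / ∑ x ∈ univ.filter E, p x := by
    simp only [condMass, ← sum_filter, filter_filter, sum_div, and_comm]
  funext x
  simp only [condMass] at hF ⊢
  by_cases hFx : F x <;> by_cases hEx : E x <;>
    simp [hFx, hEx, hF, hG, div_div_div_cancel_right₀ hE]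

theorem mapMass_condMass [DecidableEq β] (f : α → β) (E : α → Prop) [DecidablePred E]
    (p : α → ℝ) (y : β) :
    mapMass f (condMass E p) y =
      (∑ x ∈ univ.filter (fun x => E x ∧ f x = y), p x) / ∑ x ∈ univ.filter E, p x := by
  simp only [mapMass, condMass, ← sum_filter, filter_filter, sum_div, and_comm]

theorem mapMass_mapMass [Fintype β] [DecidableEq β] [DecidableEq γ] (f : α → β) (g : β → γ)
    (q : α → ℝ) : mapMass g (mapMass f q) = mapMass (g ∘ f) q := by
  funext z
  simp only [mapMass]
  rw [← sum_fiberwise_of_maps_to (g := f) (t := univ.filter (g · = z)) (by simp)]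
  refine sum_congr rfl fun y hy => sum_congr (ext fun x => ?_) fun _ _ => rfl
  simp only [mem_filter, mem_univ, true_and, Function.comp_apply] at hy ⊢
  exact ⟨fun hx => ⟨hx ▸ hy, hx⟩, And.right⟩

end MassFunction

section ConditionEventNet

variable {S : Type*} [DecidableEq S]

theorem ass_eq_condMass [Fintype S] (A : Finset S) (b : Bool) (p : (S → Bool) → ℝ) :
    ass A b p = condMass (fun m => ∀ s ∈ A, m s = b) p := rfl

theorem setOp_eq_mapMass [Fintype S] (A : Finset S) (b : Bool) (q : (S → Bool) → ℝ) :
    setOp A b q = mapMass (fun m => A.piecewise (fun _ => b) m) q := by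
  funext m
  simp only [setOp, mapMass]
  split_ifs with hm
  · congr 1
    ext m'
    simp only [mem_filter, mem_univ, true_and, funext_iff, piecewise]
    refine ⟨fun h s => ?_, fun h s hs => by simpa [hs] using h s⟩
    by_cases hs : s ∈ A <;> simp [hs, hm, h]
  · refine (sum_eq_zero fun m' hm' => absurd ?_ hm).symm
    simp only [mem_filter, mem_univ, true_and] at hm'
    intro s hs
    simp [← hm', hs]

theorem piecewise_comp_piecewise_eq_fire (pre post : Finset S) :
    (fun m : S → Bool => post.piecewise (fun _ => true) m) ∘
      (fun m => pre.piecewise (fun _ => false) m) = fire pre post := rfl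

end ConditionEventNet

theorem stmt_4_general {S : Type*} [Fintype S] [DecidableEq S]
    (pre post : Finset S)
    (p : (S → Bool) → ℝ)
    (hp0 : ∀ m, 0 ≤ p m)
    (hpos : 0 < ∑ m' ∈ univ.filter (fun m' : S → Bool => enables pre post m'), p m')
    (m : S → Bool) :
    setOp post true (setOp pre false (ass post false (ass pre true p))) m =
      (∑ m' ∈ univ.filter
          (fun m' : S → Bool => enables pre post m' ∧ fire pre post m' = m), p m') /
        ∑ m' ∈ univ.filter (fun m' : S → Bool => enables pre post m'), p m' := by
  have hpre : ∑ m' ∈ univ.filter (fun m' : S → Bool => ∀ s ∈ pre, m' s = true), p m' ≠ 0 :=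
    (hpos.trans_le <| sum_le_sum_of_subset_of_nonneg
      (fun m' hm' => mem_filter.2 ⟨mem_univ _, (mem_filter.1 hm').2.1⟩)
      fun m' _ _ => hp0 m').ne'
  rw [setOp_eq_mapMass, setOp_eq_mapMass, mapMass_mapMass, piecewise_comp_piecewise_eq_fire,
    ass_eq_condMass, ass_eq_condMass,
    condMass_condMass _ _ (enables pre post) _ hpre fun _ => Iff.rfl, mapMass_condMass]

/-- Success of a transition conditions correctly: `success_t(p)(m)` is the conditional
probability of `{m' : m' ⇒ᵗ m}` given that `t` is enabled. -/
theorem stmt_4 {S : Type*} [Fintype S] [DecidableEq S]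
    (pre post : Finset S) (hdisj : Disjoint pre post)
    (p : (S → Bool) → ℝ)
    (hp0 : ∀ m, 0 ≤ p m) (hp1 : ∑ m, p m = 1)
    (hpos : 0 < ∑ m' ∈ univ.filter (fun m' : S → Bool => enables pre post m'), p m')
    (m : S → Bool) :
    setOp post true (setOp pre false (ass post false (ass pre true p))) m =
      (∑ m' ∈ univ.filter
          (fun m' : S → Bool => enables pre post m' ∧ fire pre post m' = m), p m') /
        ∑ m' ∈ univ.filter (fun m' : S → Bool => enables pre post m'), p m' :=
  stmt_4_general pre post p hp0 hpos m
end

section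
/- Decomposition of stochastic matrices (disintegration): for every matrix P of type n→m (a 2^m×2^n matrix with entries in [0,1]) and k < m, there exist matrices P⊢: n→(m−k) and P⊣: (n+m−k)→k such that (id_{m−k} ⊗ P⊣)·((∇_{m−k}·P⊢) ⊗ id_n)·∇_n = P, where P⊣ can be chosen stochastic and P⊢ sub-stochastic, with P⊢ stochastic whenever P is stochastic. Concretely P⊢(x|z) = ∑_v P(xv|z) and P⊣(y|xz) = P(xy|z)/P⊢(x|z) when P⊢(x|z) > 0 (arbitrary stochastic row otherwise). -/
open Matrix Kronecker

/-- The duplicator matrix on an index type `α`. -/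
def dupM (α : Type*) [DecidableEq α] : Matrix (α × α) α ℝ :=
  fun x y => if x.1 = y ∧ x.2 = y then 1 else 0

/-- Disintegration: every sub-stochastic matrix `P : n → m` factors, for a split of the
`m` outputs into the first `m-k` and the last `k`, as
`(id_{m-k} ⊗ P⊣)·((∇_{m-k}·P⊢) ⊗ id_n)·∇_n = P` with `P⊣` stochastic, `P⊢` sub-stochastic
(stochastic whenever `P` is), and `P⊢(x|z) = ∑_v P(xv|z)`. -/
theorem stmt_12 {a k n : ℕ}
    (P : Matrix ((Fin a → Bool) × (Fin k → Bool)) (Fin n → Bool) ℝ)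
    (hP0 : ∀ i j, 0 ≤ P i j) (hP1 : ∀ j, ∑ i, P i j ≤ 1) :
    ∃ (Pu : Matrix (Fin a → Bool) (Fin n → Bool) ℝ)
      (Pd : Matrix (Fin k → Bool) ((Fin a → Bool) × (Fin n → Bool)) ℝ),
      -- P⊢ is the marginal of P on the first m-k outputs
      (∀ x z, Pu x z = ∑ v, P (x, v) z) ∧
      -- P⊢ is sub-stochastic
      (∀ x z, 0 ≤ Pu x z) ∧ (∀ z, ∑ x, Pu x z ≤ 1) ∧
      -- P⊣ is stochastic
      (∀ y w, 0 ≤ Pd y w) ∧ (∀ w, ∑ y, Pd y w = 1) ∧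
      -- if P is stochastic then so is P⊢
      ((∀ j, ∑ i, P i j = 1) → ∀ z, ∑ x, Pu x z = 1) ∧
      -- the factorization (id_{m-k} ⊗ P⊣)·((∇_{m-k}·P⊢) ⊗ id_n)·∇_n = P
      ((1 : Matrix (Fin a → Bool) (Fin a → Bool) ℝ) ⊗ₖ Pd) *
        Matrix.reindex
          (Equiv.prodAssoc (Fin a → Bool) (Fin a → Bool) (Fin n → Bool))
          (Equiv.refl (Fin n → Bool))
          (((dupM (Fin a → Bool) * Pu) ⊗ₖ (1 : Matrix (Fin n → Bool) (Fin n → Bool) ℝ)) *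
            dupM (Fin n → Bool)) = P := by
  classical
  set Pu : Matrix (Fin a → Bool) (Fin n → Bool) ℝ := fun x z => ∑ v, P (x, v) z with hPu
  set Pd : Matrix (Fin k → Bool) ((Fin a → Bool) × (Fin n → Bool)) ℝ :=
    fun y w => if 0 < Pu w.1 w.2 then P (w.1, y) w.2 / Pu w.1 w.2
      else (Fintype.card (Fin k → Bool) : ℝ)⁻¹ with hPd
  have hPu0 : ∀ x z, 0 ≤ Pu x z := fun x z =>
    Finset.sum_nonneg fun v _ => hP0 _ _
  have hsum : ∀ z, ∑ x, Pu x z = ∑ i, P i z := by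
    intro z
    rw [Fintype.sum_prod_type]
  have key : ∀ x y z, Pd y (x, z) * Pu x z = P (x, y) z := by
    intro x y z
    by_cases h : 0 < Pu x z
    · simp only [hPd, if_pos h]
      field_simp
    · have hz : Pu x z = 0 := le_antisymm (not_lt.mp h) (hPu0 x z)
      have : P (x, y) z = 0 := by
        have := (Finset.sum_eq_zero_iff_of_nonneg (fun v _ => hP0 (x, v) z)).mp hz
        exact this y (Finset.mem_univ y)
      simp [hz, this]
  refine ⟨Pu, Pd, fun x z => rfl, hPu0, ?_, ?_, ?_, ?_, ?_⟩
  · intro z; rw [hsum]; exact hP1 z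
  · intro y w
    simp only [hPd]
    split
    · exact div_nonneg (hP0 _ _) (le_of_lt ‹_›)
    · positivity
  · rintro ⟨x, z⟩
    simp only [hPd]
    by_cases h : 0 < Pu x z
    · simp only [if_pos h]
      rw [← Finset.sum_div]
      exact div_self (ne_of_gt h)
    · simp only [if_neg h, Finset.sum_const, Finset.card_univ, nsmul_eq_mul]
      rw [mul_inv_cancel₀]
      positivity
  · intro hst z; rw [hsum]; exact hst z
  · ext ⟨x, y⟩ z
    rw [← key x y z]
    simp only [Matrix.mul_apply, Matrix.reindex_apply, Matrix.submatrix_apply,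
      Matrix.kroneckerMap_apply, Matrix.one_apply, dupM, Equiv.refl_symm, Equiv.refl_apply,
      Fintype.sum_prod_type, Equiv.prodAssoc_symm_apply]
    simp [Finset.sum_ite_eq, Finset.sum_ite_eq', ite_and, mul_ite, ite_mul,
      Finset.mul_sum, Finset.sum_mul, mul_comm]
end
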